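/- arXiv:1104.4299 — 4 statements merged into one kernel-verified Lean document; each statement's English description precedes it below -/
import Mathlib

section
/- Let (x_n), (z_n) be real sequences with |x_n|>2, |z_n|>2, |z_n|>|x_{n-1}|, and suppose z_{n+1} = z_n S_l(x_n) - x_{n-1} S_{l-1}(x_n) for some integer l ≥ 1, where S_l are the Chebyshev polynomials of the second kind. Then |z_{n+1}| ≥ |z_n|(|x_n|-1)^l, and in particular |z_{n+1}| > |z_n| and |z_{n+1}| > |x_n|. -/
/-- `chebS x n` is the Chebyshev polynomial of the second kind `S_{n-1}(x)`. -/
def chebS (x : ℝ) : ℕ → ℝ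
  | 0 => 0
  | 1 => 1
  | (n + 2) => x * chebS x (n + 1) - chebS x n

/-- If `|x_n| > 2`, `|z_n| > 2`, `|z_n| > |x_{n-1}|` and
`z_{n+1} = z_n S_l(x_n) - x_{n-1} S_{l-1}(x_n)` for some `l ≥ 1`, then
`|z_{n+1}| ≥ |z_n| (|x_n| - 1)^l`, and in particular `|z_{n+1}| > |z_n|` and
`|z_{n+1}| > |x_n|`. -/
theorem stmt1 (xn xnm1 zn zn1 : ℝ) (l : ℕ) (hl : 1 ≤ l)
    (hxn : |xn| > 2) (hzn : |zn| > 2) (hznx : |zn| > |xnm1|)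
    (hrec : zn1 = zn * chebS xn (l + 1) - xnm1 * chebS xn l) :
    |zn1| ≥ |zn| * (|xn| - 1) ^ l ∧ |zn1| > |zn| ∧ |zn1| > |xn| := by
  set w : ℕ → ℝ := fun k => zn * chebS xn (k + 1) - xnm1 * chebS xn k with hw
  have hstep : ∀ k : ℕ, |w (k + 1)| ≥ (|xn| - 1) * |w k| := by
    intro k
    induction k with
    | zero =>
      have h0 : w 0 = zn := by simp [hw, chebS]
      have h1 : w 1 = zn * xn - xnm1 := by simp [hw, chebS]
      rw [h0, h1]
      have := abs_sub_abs_le_abs_sub (zn * xn) xnm1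
      rw [abs_mul] at this
      nlinarith [abs_nonneg zn, abs_nonneg xnm1]
    | succ n ih =>
      have hrec2 : w (n + 2) = xn * w (n + 1) - w n := by
        simp only [hw, chebS]; ring
      have h := abs_sub_abs_le_abs_sub (xn * w (n + 1)) (w n)
      rw [abs_mul] at h
      rw [hrec2]
      nlinarith [abs_nonneg (w n), abs_nonneg (w (n + 1))]
  have hpow : ∀ k : ℕ, |w k| ≥ |zn| * (|xn| - 1) ^ k := by
    intro k
    induction k with
    | zero => simp [hw, chebS]
    | succ n ih =>
      have := hstep n
      have hx1 : (0:ℝ) < |xn| - 1 := by linarith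
      calc |w (n + 1)| ≥ (|xn| - 1) * |w n| := this
        _ ≥ (|xn| - 1) * (|zn| * (|xn| - 1) ^ n) := by nlinarith
        _ = |zn| * (|xn| - 1) ^ (n + 1) := by ring
  have hz : zn1 = w l := by rw [hrec]
  have h1 : |zn1| ≥ |zn| * (|xn| - 1) ^ l := hz ▸ hpow l
  have hpge : (|xn| - 1) ^ l ≥ |xn| - 1 := by
    calc (|xn| - 1) ^ l ≥ (|xn| - 1) ^ 1 :=
          pow_le_pow_right₀ (by linarith) hl
      _ = |xn| - 1 := pow_one _
  refine ⟨h1, ?_, ?_⟩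
  · nlinarith
  · nlinarith
end

section
/- Suppose 0 < λ₂ < λ₁, E real with E = ±(2λ₁ + ε) for some ε > 0, and l ≥ 2 an integer. Define x₋₁ = (λ₁²+λ₂²)/(λ₁λ₂), x₀ = E/λ₂, z₀ = E/λ₁, and z₁ = (z₀x₀ - x₋₁) S_{l-1}(x₀) - z₀ S_{l-2}(x₀) where S_j are Chebyshev second kind polynomials. Then |z₁| ≥ (2λ₁/λ₂)(|x₀|-1)^{l-1} and |z₁| > |x₀|. -/
lemma chebS_neg (x : ℝ) : ∀ n, chebS (-x) n = (-1)^(n+1) * chebS x n := by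
  intro n
  induction n using Nat.twoStepInduction with
  | zero => simp [chebS]
  | one => simp [chebS]
  | more n ih1 ih2 =>
    show -x * chebS (-x) (n+1) - chebS (-x) n = (-1)^(n+2+1) * (x * chebS x (n+1) - chebS x n)
    rw [ih1, ih2]; ring

lemma keyD (t r : ℝ) (hr : 1 ≤ r) (ht : 2*r ≤ t) (m : ℕ) :
    chebS t (m+4) - r^2*chebS t (m+2) - 2*r^2*(t-1)^(m+1)
       ≥ chebS t (m+3) - r^2*chebS t (m+1) - 2*r^2*(t-1)^m
    ∧ chebS t (m+3) - r^2*chebS t (m+1) - 2*r^2*(t-1)^m ≥ 0 := by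
  have ht2 : (2:ℝ) ≤ t := by nlinarith
  induction m with
  | zero =>
    have h1 : chebS t 1 = 1 := rfl
    have h2 : chebS t 2 = t := by simp [chebS]
    have h3 : chebS t 3 = t*t - 1 := by simp [chebS]
    have h4 : chebS t 4 = t*(t*t-1) - t := by simp [chebS]
    constructor
    · rw [h1, h2, h3, h4]
      simp only [zero_add, pow_one, pow_zero]
      nlinarith [mul_nonneg (mul_nonneg (by linarith : (0:ℝ) ≤ 3*t-5)
          (by linarith : (0:ℝ) ≤ t - 2*r)) (by linarith : (0:ℝ) ≤ t + 2*r),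
        mul_nonneg (by linarith : (0:ℝ) ≤ t-2) (by nlinarith : (0:ℝ) ≤ t^2+3*t-2)]
    · rw [h1, h3]
      simp only [pow_zero]
      nlinarith [mul_nonneg (by linarith : (0:ℝ) ≤ t - 2*r) (by linarith : (0:ℝ) ≤ t + 2*r)]
  | succ m ih =>
    obtain ⟨ih1, ih2⟩ := ih
    have hD1 : chebS t (m+4) - r^2*chebS t (m+2) - 2*r^2*(t-1)^(m+1) ≥ 0 := le_trans ih2 ih1
    refine ⟨?_, hD1⟩
    simp only [show m+1+4 = m+5 from by omega, show m+1+3 = m+4 from by omega,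
      show m+1+2 = m+3 from by omega, show m+1+1 = m+2 from by omega]
    have e5 : chebS t (m+5) = t * chebS t (m+4) - chebS t (m+3) := rfl
    have e4 : chebS t (m+4) = t * chebS t (m+3) - chebS t (m+2) := rfl
    have hp : (0:ℝ) ≤ (t-1)^m := pow_nonneg (by linarith) m
    have hps : (t-1)^(m+1) = (t-1)^m * (t-1) := pow_succ _ _
    have hps2 : (t-1)^(m+2) = (t-1)^m * (t-1) * (t-1) := by
      rw [pow_succ, hps]
    have e3 : chebS t (m+3) = t * chebS t (m+2) - chebS t (m+1) := rfl
    rw [e5, e4, hps2, hps]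
    rw [hps] at ih1 hD1
    rw [e4] at ih1 hD1
    nlinarith [e3, mul_nonneg (by linarith : (0:ℝ) ≤ t-2) hD1,
      mul_nonneg (mul_nonneg (by positivity : (0:ℝ) ≤ 2*r^2) hp) (by linarith : (0:ℝ) ≤ t-2)]

lemma main_pos (u v eps : ℝ) (hv : 0 < v) (hlt : v < u) (heps : 0 < eps)
    (k : ℕ) (t : ℝ) (ht : t = (2*u+eps)/v) :
    ((2*u+eps)/u * ((2*u+eps)/v) - (u^2+v^2)/(u*v)) * chebS t (k+2)
        - (2*u+eps)/u * chebS t (k+1) ≥ (2*u/v) * (t-1)^(k+1)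
    ∧ ((2*u+eps)/u * ((2*u+eps)/v) - (u^2+v^2)/(u*v)) * chebS t (k+2)
        - (2*u+eps)/u * chebS t (k+1) > t := by
  have hu : 0 < u := hv.trans hlt
  set r := u / v with hrdef
  have hr1 : 1 < r := (one_lt_div hv).2 hlt
  have htr : 2*r < t := by
    rw [ht, hrdef, mul_div_assoc']
    exact (div_lt_div_iff_of_pos_right hv).2 (by linarith)
  have hid : ((2*u+eps)/u * ((2*u+eps)/v) - (u^2+v^2)/(u*v)) * chebS t (k+2)
        - (2*u+eps)/u * chebS t (k+1)
      = (v/u) * (chebS t (k+4) - r^2 * chebS t (k+2)) := by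
    have e4 : chebS t (k+4) = t * chebS t (k+3) - chebS t (k+2) := rfl
    have e3 : chebS t (k+3) = t * chebS t (k+2) - chebS t (k+1) := rfl
    rw [e4, e3, ht, hrdef]
    field_simp
    ring
  have hD := (keyD t r hr1.le htr.le (k+1)).2
  have hvu : 0 < v/u := div_pos hv hu
  have hineq : (v/u) * (chebS t (k+4) - r^2*chebS t (k+2)) ≥ (v/u) * (2*r^2*(t-1)^(k+1)) := by
    apply mul_le_mul_of_nonneg_left _ hvu.le
    have : chebS t (k+1+3) = chebS t (k+4) := by norm_num
    rw [this] at hD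
    have : chebS t (k+1+1) = chebS t (k+2) := by norm_num
    rw [this] at hD
    linarith
  have hrw : (v/u) * (2*r^2*(t-1)^(k+1)) = (2*u/v)*(t-1)^(k+1) := by
    rw [hrdef]; field_simp
  have hmain : ((2*u+eps)/u * ((2*u+eps)/v) - (u^2+v^2)/(u*v)) * chebS t (k+2)
        - (2*u+eps)/u * chebS t (k+1) ≥ (2*u/v) * (t-1)^(k+1) := by
    rw [hid]
    calc (v/u) * (chebS t (k+4) - r^2 * chebS t (k+2))
        ≥ (v/u) * (2*r^2*(t-1)^(k+1)) := hineq
      _ = (2*u/v)*(t-1)^(k+1) := hrw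
  refine ⟨hmain, lt_of_lt_of_le ?_ hmain⟩
  have h2uv : 2*u/v = 2*r := by rw [hrdef]; ring
  have ht1 : (1:ℝ) ≤ t - 1 := by linarith
  have hpow : t - 1 ≤ (t-1)^(k+1) := le_self_pow₀ ht1 (by omega)
  have h2r : t < 2*r*(t-1) := by
    nlinarith [mul_pos (by linarith : (0:ℝ) < 2*r-1) (by linarith : (0:ℝ) < t - 2*r),
      mul_pos (by linarith : (0:ℝ) < r-1) (by linarith : (0:ℝ) < r)]
  calc t < 2*r*(t-1) := h2r
    _ ≤ 2*r*(t-1)^(k+1) := by nlinarith [hpow, (by linarith : (0:ℝ) < 2*r)]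
    _ = (2*u/v)*(t-1)^(k+1) := by rw [h2uv]

/-- For `0 < λ₂ < λ₁`, `E = ±(2λ₁ + ε)` with `ε > 0`, `l ≥ 2`, with
`x₋₁ = (λ₁²+λ₂²)/(λ₁λ₂)`, `x₀ = E/λ₂`, `z₀ = E/λ₁` and
`z₁ = (z₀x₀ - x₋₁) S_{l-1}(x₀) - z₀ S_{l-2}(x₀)`, one has
`|z₁| ≥ (2λ₁/λ₂)(|x₀|-1)^(l-1)` and `|z₁| > |x₀|`. -/
theorem stmt5 (l1 l2 E eps : ℝ) (hl2 : 0 < l2) (hlt : l2 < l1)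
    (heps : 0 < eps) (hE : E = 2 * l1 + eps ∨ E = -(2 * l1 + eps))
    (l : ℕ) (hl : 2 ≤ l) (x0 z0 xm1 z1 : ℝ)
    (hx0 : x0 = E / l2) (hz0 : z0 = E / l1)
    (hxm1 : xm1 = (l1 ^ 2 + l2 ^ 2) / (l1 * l2))
    (hz1 : z1 = (z0 * x0 - xm1) * chebS x0 l - z0 * chebS x0 (l - 1)) :
    |z1| ≥ (2 * l1 / l2) * (|x0| - 1) ^ (l - 1) ∧ |z1| > |x0| := by
  have hu : 0 < l1 := hl2.trans hlt
  obtain ⟨k, rfl⟩ : ∃ k, l = k + 2 := ⟨l - 2, by omega⟩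
  have hidx : k + 2 - 1 = k + 1 := by omega
  set t : ℝ := (2*l1+eps)/l2 with htdef
  have hmp := main_pos l1 l2 eps hl2 hlt heps k t rfl
  have ht0 : 0 < t := by positivity
  set Z : ℝ := ((2*l1+eps)/l1 * ((2*l1+eps)/l2) - (l1^2+l2^2)/(l1*l2)) * chebS t (k+2)
        - (2*l1+eps)/l1 * chebS t (k+1) with hZdef
  have hZt : Z > t := hmp.2
  have hZ0 : 0 < Z := ht0.trans hZt
  rw [hidx]
  rcases hE with hE | hE
  · have hx0t : x0 = t := by rw [hx0, hE]
    have hz1Z : z1 = Z := by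
      rw [hz1, hz0, hxm1, hx0t, hE, hidx, hZdef]
      try ring
    rw [hz1Z, hx0t, abs_of_pos hZ0, abs_of_pos ht0]
    exact ⟨hmp.1, hZt⟩
  · have hx0t : x0 = -t := by rw [hx0, hE]; ring
    have hz1Z : z1 = (-1)^(k+3) * Z := by
      rw [hz1, hz0, hxm1, hx0t, hE, hidx, hZdef,
        chebS_neg t (k+2), chebS_neg t (k+1)]
      try ring
    have habs : |z1| = Z := by
      rw [hz1Z, abs_mul, abs_pow, abs_neg, abs_one, one_pow, one_mul, abs_of_pos hZ0]
    have habsx : |x0| = t := by rw [hx0t, abs_neg, abs_of_pos ht0]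
    rw [habs, habsx]
    exact ⟨hmp.1, hZt⟩
end

section
/- Define the trace map T(x,y,z) = (z S_a(y) - x S_{a-1}(y), y, z S_{a-1}(y) - x S_{a-2}(y)) for a fixed integer a ≥ 1, where S_l are Chebyshev polynomials of the second kind. Then, for l₂ real, the system l₁ = l₂ S_{a-1}(l₁) - l₁ S_{a-2}(l₁) and l₂ = l₂ S_a(l₁) - l₁ S_{a-1}(l₁) has no solution with |l₁| > 2. -/
lemma chebS_rec (x : ℝ) (n : ℕ) :
    chebS x (n + 2) = x * chebS x (n + 1) - chebS x n := rfl

/-- Growth of `|chebS|` for `|x| > 2`. -/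
lemma chebS_growth (x : ℝ) (hx : 2 < |x|) :
    ∀ n, 1 ≤ |chebS x (n + 1)| ∧ |chebS x (n + 1)| ≤ |chebS x (n + 2)| := by
  intro n
  induction n with
  | zero =>
    have e1 : chebS x 1 = 1 := rfl
    have e2 : chebS x 2 = x := by simp [chebS_rec, chebS]
    rw [e1, e2]
    constructor
    · norm_num
    · simp
      linarith
  | succ m ih =>
    obtain ⟨h1, h2⟩ := ih
    refine ⟨by linarith, ?_⟩
    have key : |chebS x (m + 3)| ≥ |x| * |chebS x (m + 2)| - |chebS x (m + 1)| := by
      have : chebS x (m + 3) = x * chebS x (m + 2) - chebS x (m + 1) := chebS_rec x (m + 1)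
      rw [this]
      have := abs_sub_abs_le_abs_sub (x * chebS x (m + 2)) (chebS x (m + 1))
      rw [abs_mul] at this
      linarith
    have h3 : 1 ≤ |chebS x (m + 2)| := le_trans h1 h2
    nlinarith
  
/-- Growth of `|chebS x (n+2) - chebS x n|` (i.e. `2 T` Chebyshev first kind) for `|x| > 2`. -/
lemma chebS_diff_growth (x : ℝ) (hx : 2 < |x|) :
    ∀ n, 2 < |chebS x (n + 2) - chebS x n| ∧
      |chebS x (n + 2) - chebS x n| ≤ |chebS x (n + 3) - chebS x (n + 1)| := by
  intro n
  induction n with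
  | zero =>
    have e0 : chebS x 2 - chebS x 0 = x := by simp [chebS]
    have e1 : chebS x 3 - chebS x 1 = x * x - 2 := by
      simp [chebS_rec, chebS]; ring
    rw [e0, e1]
    constructor
    · exact hx
    · have hx2 : x * x = |x| * |x| := (abs_mul_abs_self x).symm
      have h2 : |x * x - 2| = x * x - 2 := by
        rw [abs_of_nonneg]; nlinarith
      rw [h2]
      nlinarith
  | succ m ih =>
    obtain ⟨h1, h2⟩ := ih
    refine ⟨by linarith, ?_⟩
    have hrec : chebS x (m + 4) - chebS x (m + 2) =
        x * (chebS x (m + 3) - chebS x (m + 1)) - (chebS x (m + 2) - chebS x m) := by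
      rw [chebS_rec x (m + 2), chebS_rec x m]; ring
    have key : |chebS x (m + 4) - chebS x (m + 2)| ≥
        |x| * |chebS x (m + 3) - chebS x (m + 1)| - |chebS x (m + 2) - chebS x m| := by
      rw [hrec]
      have := abs_sub_abs_le_abs_sub (x * (chebS x (m + 3) - chebS x (m + 1)))
        (chebS x (m + 2) - chebS x m)
      rw [abs_mul] at this
      linarith
    nlinarith

/-- Pell-like identity. -/
lemma chebS_pell (x : ℝ) : ∀ n, chebS x (n + 1) ^ 2 - chebS x (n + 2) * chebS x n = 1 := by
  intro n
  induction n with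
  | zero => simp [chebS]
  | succ m ih =>
    rw [chebS_rec x (m + 1), chebS_rec x m] at *
    nlinarith [ih]

/-- For `a ≥ 1`, the trace map
`T(x,y,z) = (z S_a(y) - x S_{a-1}(y), y, z S_{a-1}(y) - x S_{a-2}(y))`
has no fixed point of the form `(l₂, l₁, l₁)` with `|l₁| > 2`; precisely, if
`|l₁| > 2` then the system `l₁ = l₂ S_{a-1}(l₁) - l₁ S_{a-2}(l₁)` and
`l₂ = l₂ S_a(l₁) - l₁ S_{a-1}(l₁)` has no solution. -/
theorem stmt10 (a : ℕ) (ha : 1 ≤ a) (l1 l2 : ℝ) (hl1 : |l1| > 2) :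
    ¬ (l1 = l2 * chebS l1 a - l1 * chebS l1 (a - 1) ∧
       l2 = l2 * chebS l1 (a + 1) - l1 * chebS l1 a) := by
  obtain ⟨m, rfl⟩ : ∃ m, a = m + 1 := ⟨a - 1, (Nat.succ_pred_eq_of_pos ha).symm⟩
  rintro ⟨h1, h2⟩
  simp only [Nat.add_sub_cancel] at h1
  set A := chebS l1 (m + 1) with hA
  set B := chebS l1 m with hB
  set C := chebS l1 (m + 2) with hC
  have hAne : A ≠ 0 := by
    have := (chebS_growth l1 hl1 m).1
    intro h; rw [← hA, h] at this; simp at this; linarith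
  have hl1ne : l1 ≠ 0 := by
    intro h; rw [h] at hl1; simp at hl1; linarith
  have hpell : A ^ 2 - C * B = 1 := chebS_pell l1 m
  -- from h1 : l2 * A = l1 * (1 + B)
  have e1 : l2 * A = l1 * (1 + B) := by linarith [h1]
  -- from h2 : l1 * A = l2 * (C - 1)
  have e2 : l1 * A = l2 * (C - 1) := by linarith [h2]
  have e3 : l1 * A ^ 2 = l1 * ((1 + B) * (C - 1)) := by
    have : l1 * A * A = l2 * (C - 1) * A := by rw [e2]
    calc l1 * A ^ 2 = l1 * A * A := by ring
      _ = l2 * A * (C - 1) := by rw [e2]; ring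
      _ = l1 * (1 + B) * (C - 1) := by rw [e1]
      _ = l1 * ((1 + B) * (C - 1)) := by ring
  have e4 : A ^ 2 = (1 + B) * (C - 1) := mul_left_cancel₀ hl1ne e3
  have e5 : C - B = 2 := by nlinarith [e4, hpell]
  have := (chebS_diff_growth l1 hl1 m).1
  rw [← hC, ← hB, e5] at this
  norm_num at this
end

section
/- Let (a_k)_{k≥1} be positive integers and define n_{k+1,I} = (a_{k+1}+1) n_{k,II} + a_{k+1} n_{k,III}, n_{k+1,II} = [a_{k+1} ≤ 2] · n_{k,I}, n_{k+1,III} = a_{k+1} n_{k,II} + (a_{k+1}-1) n_{k,III}, with n_{0,I}=1, n_{0,II}=0, n_{0,III}=1. Set n_k = n_{k,II} + n_{k,III}. Then for all k > 1, n_k ≥ 2 n_{k-2} + n_{k-3} (with the convention n_{-1} = 0). -/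
/-- Band-counting recursion with equality in the type-II relation: setting
`n_k = n_{k,II} + n_{k,III}`, one has `n_k ≥ 2 n_{k-2} + n_{k-3}` for all
`k > 1`, with the convention `n_{-1} = 0` (so `n₂ ≥ 2 n₀`). -/
theorem stmt13 (a : ℕ → ℕ) (ha : ∀ k, 1 ≤ k → 1 ≤ a k)
    (nI nII nIII : ℕ → ℕ)
    (hI0 : nI 0 = 1) (hII0 : nII 0 = 0) (hIII0 : nIII 0 = 1)
    (hIrec : ∀ k, nI (k + 1) = (a (k + 1) + 1) * nII k + a (k + 1) * nIII k)
    (hIIrec : ∀ k, nII (k + 1) = (if a (k + 1) ≤ 2 then nI k else 0))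
    (hIIIrec : ∀ k,
      nIII (k + 1) = a (k + 1) * nII k + (a (k + 1) - 1) * nIII k)
    (n : ℕ → ℕ) (hn : ∀ k, n k = nII k + nIII k) :
    n 2 ≥ 2 * n 0 ∧ ∀ k, n (k + 3) ≥ 2 * n (k + 1) + n k := by
  -- key identity: nI (k+1) = nIII (k+1) + n k
  have key : ∀ k, nI (k + 1) = nIII (k + 1) + n k := by
    intro k
    have hc := ha (k + 1) (by omega)
    obtain ⟨m, hm⟩ : ∃ m, a (k + 1) = m + 1 := ⟨a (k + 1) - 1, by omega⟩
    rw [hIrec, hIIIrec, hn, hm]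
    simp only [Nat.add_sub_cancel]
    ring
  -- invariant: nIII ≤ nI
  have inv : ∀ k, nIII k ≤ nI k := by
    intro k
    cases k with
    | zero => omega
    | succ m => rw [key m]; omega
  -- expansion of n at successor steps
  have nexp : ∀ k, n (k + 1) =
      (if a (k + 1) ≤ 2 then nI k else 0) + a (k + 1) * nII k
        + (a (k + 1) - 1) * nIII k := by
    intro k
    rw [hn, hIIrec, hIIIrec]; ring
  -- Fibonacci-type bound
  have fib : ∀ k, n (k + 1) + n k ≤ n (k + 2) := by
    intro k
    have hd := ha (k + 2) (by omega)
    have hk1 : nI (k + 1) = nIII (k + 1) + n k := key k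
    have hnk1 : n (k + 1) = nII (k + 1) + nIII (k + 1) := hn (k + 1)
    have e2 : n (k + 2) =
        (if a (k + 2) ≤ 2 then nI (k + 1) else 0) + a (k + 2) * nII (k + 1)
          + (a (k + 2) - 1) * nIII (k + 1) := nexp (k + 1)
    rcases Nat.lt_or_ge (a (k + 2)) 3 with h | h
    · -- a (k+2) = 1 or 2: the nI term is present
      rw [if_pos (by omega)] at e2
      interval_cases hval : a (k + 2) <;> simp [hval] at e2 <;> omega
    · -- a (k+2) ≥ 3
      rw [if_neg (by omega)] at e2
      have h1 : 3 * nII (k + 1) ≤ a (k + 2) * nII (k + 1) :=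
        Nat.mul_le_mul_right _ (by omega)
      have h2 : 2 * nIII (k + 1) ≤ (a (k + 2) - 1) * nIII (k + 1) :=
        Nat.mul_le_mul_right _ (by omega)
      -- need : 2 * nII (k+1) + nIII (k+1) ≥ n k
      have hc := ha (k + 1) (by omega)
      have hnk : n k = nII k + nIII k := hn k
      have h3 : n k ≤ 2 * nII (k + 1) + nIII (k + 1) := by
        rw [hIIrec, hIIIrec]
        rcases Nat.lt_or_ge (a (k + 1)) 2 with hc2 | hc2
        · -- a (k+1) = 1
          have hc1 : a (k + 1) = 1 := by omega
          have := inv k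
          simp [hc1]; omega
        · -- a (k+1) ≥ 2
          have h4 : 2 * nII k ≤ a (k + 1) * nII k :=
            Nat.mul_le_mul_right _ hc2
          have h5 : 1 * nIII k ≤ (a (k + 1) - 1) * nIII k :=
            Nat.mul_le_mul_right _ (by omega)
          split_ifs <;> omega
      omega
  have hn0 : n 0 = 1 := by rw [hn]; omega
  constructor
  · -- n 2 ≥ 2 * n 0
    have hf : n 1 + n 0 ≤ n 2 := fib 0
    have h1 : n 1 = (if a 1 ≤ 2 then nI 0 else 0) + a 1 * nII 0
        + (a 1 - 1) * nIII 0 := nexp 0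
    have ha1 := ha 1 (by omega)
    have hn1 : 1 ≤ n 1 := by
      rw [h1, hI0, hII0, hIII0]
      split_ifs with h <;> omega
    omega
  · intro k
    have he := ha (k + 3) (by omega)
    have hk2 : nI (k + 2) = nIII (k + 2) + n (k + 1) := key (k + 1)
    have hnk2 : n (k + 2) = nII (k + 2) + nIII (k + 2) := hn (k + 2)
    have e3 : n (k + 3) =
        (if a (k + 3) ≤ 2 then nI (k + 2) else 0) + a (k + 3) * nII (k + 2)
          + (a (k + 3) - 1) * nIII (k + 2) := nexp (k + 2)
    have hf1 : n (k + 1) + n k ≤ n (k + 2) := fib k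
    have hf2 : n (k + 2) + n (k + 1) ≤ n (k + 3) := fib (k + 1)
    rcases Nat.lt_or_ge (a (k + 3)) 3 with h | h
    · rw [if_pos (by omega)] at e3
      interval_cases hval : a (k + 3) <;> simp [hval] at e3 <;> omega
    · rw [if_neg (by omega)] at e3
      have h1 : 3 * nII (k + 2) ≤ a (k + 3) * nII (k + 2) :=
        Nat.mul_le_mul_right _ (by omega)
      have h2 : 2 * nIII (k + 2) ≤ (a (k + 3) - 1) * nIII (k + 2) :=
        Nat.mul_le_mul_right _ (by omega)
      omega
end
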